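/- In the setting of the previous statement (P_n ∈ Λ_n with P_0, P_1 units, a ∈ pZ_p, π_{n+1/n}(P_{n+1}) = a·P_n - ν_{n-1/n}(P_{n-1})), one has λ(P_n) = q_n for all n ≥ 0, where q_0 = q_1 = 0 and q_{n+1} = p^n - p^{n-1} + q_{n-1}. -/

import Mathlib

open MonoidAlgebra Finset

/-- `G_n`: cyclic group of order `p^n`. -/
abbrev Gn (p n : ℕ) := Multiplicative (ZMod (p ^ n))

/-- `Λ_n = ℤ_p[G_n]`. -/
abbrev Lam (p : ℕ) [Fact p.Prime] (n : ℕ) := MonoidAlgebra ℤ_[p] (Gn p n)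

/-- `ξ_n`: sum of the elements of the subgroup of order `p`. -/
noncomputable def xi (p : ℕ) [Fact p.Prime] (n : ℕ) : Lam p n :=
  ∑ σ ∈ Finset.univ.filter (fun σ : Gn p n => σ ^ p = 1), MonoidAlgebra.of ℤ_[p] (Gn p n) σ

/-- The natural surjection `G_{n+1} →* G_n`. -/
noncomputable def projHom (p n : ℕ) : Gn p (n+1) →* Gn p n :=
  AddMonoidHom.toMultiplicative
    (ZMod.castHom (pow_dvd_pow p (Nat.le_succ n)) (ZMod (p^n))).toAddMonoidHom

/-- `π_{n+1/n} : Λ_{n+1} →+* Λ_n`, the induced projection of group algebras. -/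
noncomputable def piMap (p : ℕ) [Fact p.Prime] (n : ℕ) : Lam p (n+1) →+* Lam p n :=
  MonoidAlgebra.mapDomainRingHom ℤ_[p] (projHom p n)

/-- `ν_{n/n+1} : Λ_n → Λ_{n+1}`, sending `σ` to the sum of its preimages. -/
noncomputable def nuMap (p : ℕ) [Fact p.Prime] (n : ℕ) (f : Lam p n) : Lam p (n+1) :=
  ∑ τ : Gn p (n+1), MonoidAlgebra.single τ (f.coeff (projHom p n τ))

/-- Reduction mod `p`: `ℤ_p[G_n] → 𝔽_p[G_n]` (coefficientwise). -/
noncomputable def red (p : ℕ) [Fact p.Prime] (n : ℕ) (f : Lam p n) :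
    MonoidAlgebra (ZMod p) (Gn p n) :=
  MonoidAlgebra.ofCoeff (Finsupp.mapRange (PadicInt.toZMod) (map_zero _) f.coeff)

/-- The augmentation ideal `Ĩ_n` of `𝔽_p[G_n]`. -/
noncomputable def augIdeal (p : ℕ) [Fact p.Prime] (n : ℕ) :
    Ideal (MonoidAlgebra (ZMod p) (Gn p n)) :=
  RingHom.ker ((MonoidAlgebra.lift (ZMod p) (ZMod p) (Gn p n)) 1).toRingHom

/-- `q_0 = q_1 = 0`, `q_{n+2} = p^{n+1} - p^n + q_n`. -/
def qNat (p : ℕ) : ℕ → ℕ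
  | 0 => 0
  | 1 => 0
  | (n+2) => p ^ (n+1) - p ^ n + qNat p n

/-!
Over `𝔽_p`, the group algebra `𝔽_p[G_m]` is `𝔽_p[T]/(T^{p^m})` with `T = γ - 1` (`γ` a generator),
and `T` generates the augmentation ideal, so `λ` is the `T`-adic order. The projection
`𝔽_p[G_{m+1}] → 𝔽_p[G_m]` preserves orders `≤ p^m`, and `ν(π F) = ξ F` where
`ξ = Φ_{p^{n+1}}(γ) = T^{p^{n+1} - p^n}` in characteristic `p`; so `ν` raises the order by
`p^{n+1} - p^n`. Reducing the recurrence mod `p` kills `a • P_{n+1}`, and induction in steps of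
two gives `λ(P_n) = q_n`.
-/

open Polynomial

section NilpotentGenerator

variable {k A : Type*} [Field k] [CommRing A] [Algebra k A] [FiniteDimensional k A]
  {t : A} {N : ℕ}

lemma X_pow_dvd_of_aeval_eq_zero (hsurj : Function.Surjective (aeval (R := k) t)) (hN : t ^ N = 0)
    (hdim : Module.finrank k A = N) {f : k[X]} (hf : aeval t f = 0) : X ^ N ∣ f := by
  let ψ : AdjoinRoot (X ^ N : k[X]) →ₐ[k] A :=
    AdjoinRoot.liftAlgHom _ (Algebra.ofId k A) t (by simpa [← aeval_def] using hN)
  have hψ : ∀ g, ψ (AdjoinRoot.mk _ g) = aeval t g := AdjoinRoot.liftAlgHom_mk _ _ t _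
  have hψ_surj : Function.Surjective ψ := fun x ↦
    let ⟨g, hg⟩ := hsurj x; ⟨AdjoinRoot.mk _ g, (hψ g).trans hg⟩
  have : FiniteDimensional k (AdjoinRoot (X ^ N : k[X])) :=
    (AdjoinRoot.powerBasis (pow_ne_zero N X_ne_zero)).finite
  have hψ_inj : Function.Injective ψ :=
    (LinearMap.injective_iff_surjective_of_finrank_eq_finrank (f := ψ.toLinearMap)
      (by rw [hdim]; exact finrank_quotient_span_eq_natDegree.trans (natDegree_X_pow N))).2
      hψ_surj
  rw [← AdjoinRoot.mk_eq_zero]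
  exact hψ_inj (by rw [hψ, hf, map_zero])

lemma mem_span_of_pow_mul_mem (hsurj : Function.Surjective (aeval (R := k) t)) (hN : t ^ N = 0)
    (hdim : Module.finrank k A = N) {a : ℕ} (ha : a < N) {u : A}
    (hu : t ^ a * u ∈ Ideal.span {t ^ (a + 1)}) : u ∈ Ideal.span {t} := by
  obtain ⟨w, hw⟩ := Ideal.mem_span_singleton'.1 hu
  obtain ⟨g, rfl⟩ := hsurj u
  obtain ⟨h, rfl⟩ := hsurj w
  have hker : aeval t (X ^ a * (g - X * h)) = 0 := by
    simp only [map_mul, map_sub, map_pow, aeval_X]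
    linear_combination -hw
  have hX : (X : k[X]) ∣ g - X * h := by
    rw [← mul_dvd_mul_iff_left (pow_ne_zero a X_ne_zero), ← pow_succ]
    exact (pow_dvd_pow X ha).trans (X_pow_dvd_of_aeval_eq_zero hsurj hN hdim hker)
  obtain ⟨g', hg'⟩ := (dvd_sub_left (dvd_mul_right X h)).1 hX
  rw [Ideal.mem_span_singleton, hg', map_mul, aeval_X]
  exact dvd_mul_right _ _

end NilpotentGenerator

instance {R G : Type*} [CommRing R] [Monoid G] (q : ℕ) [CharP R q] :
    CharP (MonoidAlgebra R G) q :=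
  charP_of_injective_algebraMap' R q

section GroupAlgebra

variable (p : ℕ)

abbrev LamBar (m : ℕ) := MonoidAlgebra (ZMod p) (Gn p m)

def gen (m : ℕ) : Gn p m := Multiplicative.ofAdd 1

noncomputable def augGen (m : ℕ) : LamBar p m := MonoidAlgebra.of (ZMod p) (Gn p m) (gen p m) - 1

lemma orderOf_gen (m : ℕ) : orderOf (gen p m) = p ^ m := by
  rw [gen, orderOf_ofAdd_eq_addOrderOf, ZMod.addOrderOf_one]

lemma gen_pow_eq_one_iff {m j : ℕ} : gen p m ^ j = 1 ↔ p ^ m ∣ j := by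
  rw [← orderOf_dvd_iff_pow_eq_one, orderOf_gen]

lemma projHom_gen (m : ℕ) : projHom p m (gen p (m + 1)) = gen p m :=
  congrArg Multiplicative.ofAdd
    (map_one (ZMod.castHom (pow_dvd_pow p (Nat.le_succ m)) (ZMod (p ^ m))))

variable [Fact p.Prime]

lemma exists_gen_pow {m : ℕ} (σ : Gn p m) : ∃ j < p ^ m, gen p m ^ j = σ :=
  ⟨(Multiplicative.toAdd σ).val, ZMod.val_lt _, by
    rw [gen, ← ofAdd_nsmul, nsmul_one, ZMod.natCast_zmod_val, ofAdd_toAdd]⟩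

lemma augGen_pow_card (m : ℕ) : augGen p m ^ p ^ m = 0 := by
  rw [augGen, sub_pow_char_pow, one_pow, ← map_pow, (gen_pow_eq_one_iff p).2 dvd_rfl,
    map_one, sub_self]

lemma aeval_augGen_surjective (m : ℕ) :
    Function.Surjective (aeval (R := ZMod p) (augGen p m)) := by
  rw [← AlgHom.range_eq_top, eq_top_iff]
  rintro x -
  induction x using MonoidAlgebra.induction_on with
  | of σ =>
    obtain ⟨j, -, rfl⟩ := exists_gen_pow p σ
    exact ⟨(1 + X) ^ j, by simp [augGen]⟩
  | add f g hf hg => exact add_mem hf hg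
  | smul r f hf => exact Subalgebra.smul_mem _ hf r

lemma finrank_lamBar (m : ℕ) : Module.finrank (ZMod p) (LamBar p m) = p ^ m := by
  rw [Module.finrank_eq_card_basis (MonoidAlgebra.basis (Gn p m) (ZMod p))]
  simp [ZMod.card]

lemma augIdeal_eq_span (m : ℕ) : augIdeal p m = Ideal.span {augGen p m} := by
  have hε : ∀ f : (ZMod p)[X],
      MonoidAlgebra.lift (ZMod p) (ZMod p) (Gn p m) 1 (aeval (augGen p m) f)
        = f.coeff 0 := by
    intro f
    rw [← aeval_algHom_apply, coeff_zero_eq_aeval_zero]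
    simp [augGen]
  apply le_antisymm
  · intro x hx
    obtain ⟨f, rfl⟩ := aeval_augGen_surjective p m x
    obtain ⟨g, rfl⟩ := X_dvd_iff.2 ((hε f).symm.trans hx)
    rw [map_mul, aeval_X]
    exact Ideal.mul_mem_right _ _ (Ideal.mem_span_singleton_self _)
  · rw [Ideal.span_le, Set.singleton_subset_iff, SetLike.mem_coe, augIdeal, RingHom.mem_ker]
    simpa using hε X

lemma augIdeal_pow_eq_span (m k : ℕ) : augIdeal p m ^ k = Ideal.span {augGen p m ^ k} := by
  rw [augIdeal_eq_span, Ideal.span_singleton_pow]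

end GroupAlgebra

section Projection

variable (p : ℕ) [Fact p.Prime]

noncomputable def piBar (m : ℕ) : LamBar p (m + 1) →ₐ[ZMod p] LamBar p m :=
  MonoidAlgebra.mapDomainAlgHom (ZMod p) (ZMod p) (projHom p m)

lemma piBar_augGen (m : ℕ) : piBar p m (augGen p (m + 1)) = augGen p m := by
  rw [augGen, augGen, map_sub, map_one]
  simp [piBar, projHom_gen]

lemma piBar_aeval_augGen (m : ℕ) (f : (ZMod p)[X]) :
    piBar p m (aeval (augGen p (m + 1)) f) = aeval (augGen p m) f := by
  rw [← aeval_algHom_apply, piBar_augGen]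

lemma piBar_surjective (m : ℕ) : Function.Surjective (piBar p m) := fun y ↦
  let ⟨f, hf⟩ := aeval_augGen_surjective p m y
  ⟨_, (piBar_aeval_augGen p m f).trans hf⟩

lemma mem_span_of_piBar_eq_zero {m : ℕ} {x : LamBar p (m + 1)} (hx : piBar p m x = 0) :
    x ∈ Ideal.span {augGen p (m + 1) ^ p ^ m} := by
  obtain ⟨f, rfl⟩ := aeval_augGen_surjective p (m + 1) x
  rw [piBar_aeval_augGen] at hx
  obtain ⟨g, rfl⟩ := X_pow_dvd_of_aeval_eq_zero (aeval_augGen_surjective p m)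
    (augGen_pow_card p m) (finrank_lamBar p m) hx
  rw [map_mul, map_pow, aeval_X]
  exact Ideal.mul_mem_right _ _ (Ideal.mem_span_singleton_self _)

lemma piBar_mem_span_pow {m k : ℕ} {x : LamBar p (m + 1)}
    (hx : x ∈ Ideal.span {augGen p (m + 1) ^ k}) : piBar p m x ∈ Ideal.span {augGen p m ^ k} := by
  rw [Ideal.mem_span_singleton] at hx ⊢
  simpa [piBar_augGen] using map_dvd (piBar p m) hx

lemma mem_span_pow_of_piBar_mem {m k : ℕ} (hk : k ≤ p ^ m) {x : LamBar p (m + 1)}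
    (hx : piBar p m x ∈ Ideal.span {augGen p m ^ k}) : x ∈ Ideal.span {augGen p (m + 1) ^ k} := by
  obtain ⟨y, hy⟩ := Ideal.mem_span_singleton'.1 hx
  obtain ⟨Y, rfl⟩ := piBar_surjective p m y
  have hker : x - Y * augGen p (m + 1) ^ k ∈ Ideal.span {augGen p (m + 1) ^ p ^ m} :=
    mem_span_of_piBar_eq_zero p (by rw [map_sub, map_mul, map_pow, piBar_augGen, hy, sub_self])
  have hle : Ideal.span {augGen p (m + 1) ^ p ^ m} ≤ Ideal.span {augGen p (m + 1) ^ k} :=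
    Ideal.span_singleton_le_span_singleton.2 (pow_dvd_pow _ hk)
  simpa using Ideal.add_mem _ (hle hker) (Ideal.mul_mem_left _ Y (Ideal.mem_span_singleton_self _))

end Projection

section NormElement

variable (p : ℕ) [Fact p.Prime]

noncomputable def xiBar (m : ℕ) : LamBar p m :=
  ∑ σ ∈ Finset.univ.filter (fun σ : Gn p m => σ ^ p = 1), MonoidAlgebra.of (ZMod p) (Gn p m) σ

lemma projHom_eq_one_iff {n : ℕ} (σ : Gn p (n + 1)) : projHom p n σ = 1 ↔ σ ^ p = 1 := by
  obtain ⟨j, -, rfl⟩ := exists_gen_pow p σ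
  rw [map_pow, projHom_gen, ← pow_mul, gen_pow_eq_one_iff, gen_pow_eq_one_iff, pow_succ,
    Nat.mul_dvd_mul_iff_right (Fact.out : p.Prime).pos]

lemma sum_filter_pow_eq_one_eq_sum_range {M : Type*} [AddCommMonoid M] (n : ℕ)
    (f : Gn p (n + 1) → M) :
    ∑ σ ∈ Finset.univ.filter (fun σ : Gn p (n + 1) => σ ^ p = 1), f σ
      = ∑ i ∈ Finset.range p, f (gen p (n + 1) ^ (p ^ n * i)) := by
  have hp : 0 < p := (Fact.out : p.Prime).pos
  symm
  refine Finset.sum_bij (fun i _ ↦ gen p (n + 1) ^ (p ^ n * i)) ?_ ?_ ?_ (fun _ _ ↦ rfl)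
  · intro i _
    simp only [Finset.mem_filter, Finset.mem_univ, true_and, ← pow_mul, gen_pow_eq_one_iff]
    exact ⟨i, by ring⟩
  · intro i hi j hj hij
    rw [pow_eq_pow_iff_modEq, orderOf_gen] at hij
    have hlt : ∀ k ∈ Finset.range p, p ^ n * k < p ^ (n + 1) := fun k hk ↦ by
      rw [pow_succ]; exact Nat.mul_lt_mul_of_pos_left (Finset.mem_range.1 hk) (by positivity)
    exact Nat.eq_of_mul_eq_mul_left (by positivity) (hij.eq_of_lt_of_lt (hlt i hi) (hlt j hj))
  · intro σ hσ
    obtain ⟨j, hj, rfl⟩ := exists_gen_pow p σ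
    simp only [Finset.mem_filter, Finset.mem_univ, true_and] at hσ
    rw [← pow_mul, gen_pow_eq_one_iff, pow_succ, Nat.mul_dvd_mul_iff_right hp] at hσ
    obtain ⟨i, rfl⟩ := hσ
    rw [pow_succ] at hj
    exact ⟨i, Finset.mem_range.2 (Nat.lt_of_mul_lt_mul_left hj), rfl⟩

lemma xiBar_eq (n : ℕ) : xiBar p (n + 1) = augGen p (n + 1) ^ (p ^ (n + 1) - p ^ n) := by
  have hcyc : ∑ i ∈ Finset.range p, (X ^ p ^ n : (ZMod p)[X]) ^ i
      = (X - 1) ^ (p ^ (n + 1) - p ^ n) := by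
    rw [← cyclotomic_prime_pow_eq_geom_sum Fact.out, ← mul_one (p ^ (n + 1)),
      cyclotomic_mul_prime_pow_eq _ (Fact.out : p.Prime).not_dvd_one n.succ_pos, cyclotomic_one]
    simp
  rw [xiBar, sum_filter_pow_eq_one_eq_sum_range, augGen]
  simpa [pow_mul] using congrArg (aeval (MonoidAlgebra.of (ZMod p) _ (gen p (n + 1)))) hcyc

end NormElement

section Reduction

variable (p : ℕ) [Fact p.Prime]

lemma red_eq_mapRingHom (n : ℕ) (f : Lam p n) :
    red p n f = MonoidAlgebra.mapRingHom (Gn p n) PadicInt.toZMod f := rfl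

lemma red_sub {n : ℕ} (f g : Lam p n) : red p n (f - g) = red p n f - red p n g := by
  simp only [red_eq_mapRingHom, map_sub]

lemma isUnit_red {n : ℕ} {f : Lam p n} (hf : IsUnit f) : IsUnit (red p n f) := by
  rw [red_eq_mapRingHom]
  exact hf.map _

lemma red_smul_of_dvd {n : ℕ} {a : ℤ_[p]} (ha : (p : ℤ_[p]) ∣ a) (f : Lam p n) :
    red p n (a • f) = 0 := by
  obtain ⟨b, rfl⟩ := ha
  rw [mul_smul, Nat.cast_smul_eq_nsmul, red_eq_mapRingHom, map_nsmul, nsmul_eq_mul,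
    CharP.cast_eq_zero, zero_mul]

lemma red_piMap {n : ℕ} (f : Lam p (n + 1)) :
    red p n (piMap p n f) = piBar p n (red p (n + 1) f) :=
  RingHom.congr_fun (MonoidAlgebra.mapRingHom_comp_mapDomainRingHom PadicInt.toZMod
    (projHom p n)) f

lemma coeff_nuMap {n : ℕ} (f : Lam p n) (τ : Gn p (n + 1)) :
    (nuMap p n f).coeff τ = f.coeff (projHom p n τ) := by
  simp [nuMap, MonoidAlgebra.coeff_sum, Finset.sum_apply', MonoidAlgebra.coeff_single,
    Finsupp.single_apply]

lemma coeff_piBar {n : ℕ} (F : LamBar p (n + 1)) (τ : Gn p (n + 1)) :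
    (piBar p n F).coeff (projHom p n τ)
      = ∑ x ∈ Finset.univ.filter (fun x ↦ projHom p n x = projHom p n τ), F.coeff x := by
  classical
  show Finsupp.mapDomain (projHom p n) F.coeff (projHom p n τ) = _
  rw [Finsupp.mapDomain_apply_eq_sum]
  refine Finset.sum_subset (Finset.filter_subset_filter _ (Finset.subset_univ _)) ?_
  intro x hx hx'
  simp only [Finset.mem_filter, Finsupp.mem_support_iff] at hx hx'
  exact not_not.1 fun h ↦ hx' ⟨h, hx.2⟩

lemma coeff_xiBar_mul {n : ℕ} (F : LamBar p n) (τ : Gn p n) :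
    (xiBar p n * F).coeff τ
      = ∑ σ ∈ Finset.univ.filter (fun σ : Gn p n => σ ^ p = 1), F.coeff (σ⁻¹ * τ) := by
  simp [xiBar, Finset.sum_mul, MonoidAlgebra.coeff_sum, Finset.sum_apply',
    MonoidAlgebra.coeff_single_mul_apply]

lemma red_nuMap_eq_xiBar_mul {n : ℕ} {f : Lam p n} {F : LamBar p (n + 1)}
    (hF : piBar p n F = red p n f) : red p (n + 1) (nuMap p n f) = xiBar p (n + 1) * F := by
  ext τ
  have hcoeff : (red p (n + 1) (nuMap p n f)).coeff τ = (piBar p n F).coeff (projHom p n τ) := by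
    rw [hF]
    exact congrArg PadicInt.toZMod (coeff_nuMap p f τ)
  rw [hcoeff, coeff_piBar, coeff_xiBar_mul]
  refine (Finset.sum_nbij' (fun σ ↦ σ⁻¹ * τ) (fun x ↦ τ * x⁻¹) ?_ ?_ ?_ ?_ fun _ _ ↦ rfl).symm
  · intro σ
    simp [projHom_eq_one_iff]
  · intro x
    simpa [← projHom_eq_one_iff, mul_inv_eq_one] using Eq.symm
  · intro σ _; simp
  · intro x _; simp

end Reduction

lemma pow_succ_sub_pow_add_lt {p n q : ℕ} (hp : 0 < p) (hq : q < p ^ n) :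
    p ^ (n + 1) - p ^ n + q < p ^ (n + 1) := by
  have : p ^ n ≤ p ^ (n + 1) := Nat.pow_le_pow_right hp n.le_succ
  omega

lemma qNat_lt_pow {p : ℕ} (hp : 0 < p) : ∀ n, qNat p n < p ^ n
  | 0 => Nat.zero_lt_one
  | 1 => by simpa [qNat]
  | n + 2 => (pow_succ_sub_pow_add_lt hp (qNat_lt_pow hp n)).trans_le
      (Nat.pow_le_pow_right hp (n + 1).le_succ)

section AugOrder

def HasAugOrder {p m : ℕ} [Fact p.Prime] (x : LamBar p m) (k : ℕ) : Prop :=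
  x ∈ augIdeal p m ^ k ∧ x ∉ augIdeal p m ^ (k + 1)

variable {p : ℕ} [Fact p.Prime]

lemma hasAugOrder_iff {m k : ℕ} {x : LamBar p m} :
    HasAugOrder x k ↔
      x ∈ Ideal.span {augGen p m ^ k} ∧ x ∉ Ideal.span {augGen p m ^ (k + 1)} := by
  rw [HasAugOrder, augIdeal_pow_eq_span, augIdeal_pow_eq_span]

lemma HasAugOrder.neg {m k : ℕ} {x : LamBar p m} (h : HasAugOrder x k) : HasAugOrder (-x) k := by
  simpa only [HasAugOrder, neg_mem_iff] using h

lemma hasAugOrder_zero_of_isUnit {m : ℕ} {x : LamBar p m} (hx : IsUnit x) : HasAugOrder x 0 := by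
  rw [HasAugOrder, pow_zero, zero_add, pow_one, Ideal.one_eq_top]
  exact ⟨Submodule.mem_top, fun h ↦ RingHom.ker_ne_top _ (Ideal.eq_top_of_isUnit_mem _ h hx)⟩

lemma HasAugOrder.of_piBar {m k : ℕ} (hk : k ≤ p ^ m) {x : LamBar p (m + 1)}
    (h : HasAugOrder (piBar p m x) k) : HasAugOrder x k := by
  rw [hasAugOrder_iff] at h ⊢
  exact ⟨mem_span_pow_of_piBar_mem p hk h.1, fun hx ↦ h.2 (piBar_mem_span_pow p hx)⟩

lemma HasAugOrder.xiBar_mul {n q : ℕ} (hq : q < p ^ n) {F : LamBar p (n + 1)}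
    (h : HasAugOrder (piBar p n F) q) :
    HasAugOrder (xiBar p (n + 1) * F) (p ^ (n + 1) - p ^ n + q) := by
  rw [hasAugOrder_iff] at h ⊢
  obtain ⟨Y, rfl⟩ := Ideal.mem_span_singleton.1 (mem_span_pow_of_piBar_mem p hq.le h.1)
  rw [xiBar_eq, ← mul_assoc, ← pow_add]
  refine ⟨Ideal.mem_span_singleton.2 (dvd_mul_right _ _), fun hmem ↦ h.2 ?_⟩
  obtain ⟨w, rfl⟩ := Ideal.mem_span_singleton.1 <| mem_span_of_pow_mul_mem
    (aeval_augGen_surjective p _) (augGen_pow_card p _) (finrank_lamBar p _)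
    (pow_succ_sub_pow_add_lt (Fact.out : p.Prime).pos hq) hmem
  exact piBar_mem_span_pow p (Ideal.mem_span_singleton.2 ⟨w, by ring⟩)

lemma hasAugOrder_red_nuMap {n q : ℕ} (hq : q < p ^ n) {f : Lam p n}
    (h : HasAugOrder (red p n f) q) :
    HasAugOrder (red p (n + 1) (nuMap p n f)) (p ^ (n + 1) - p ^ n + q) := by
  obtain ⟨F, hF⟩ := piBar_surjective p n (red p n f)
  rw [red_nuMap_eq_xiBar_mul p hF]
  exact HasAugOrder.xiBar_mul hq (hF ▸ h)

end AugOrder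

theorem stmt17_general (p : ℕ) [Fact p.Prime] (P : ∀ n, Lam p n)
    (hP0 : IsUnit (P 0)) (hP1 : IsUnit (P 1))
    (a : ℤ_[p]) (ha : (p : ℤ_[p]) ∣ a)
    (hrec : ∀ n : ℕ, piMap p (n+1) (P (n+2)) = a • P (n+1) - nuMap p n (P n)) :
    ∀ n : ℕ, red p n (P n) ∈ (augIdeal p n) ^ (qNat p n) ∧
      red p n (P n) ∉ (augIdeal p n) ^ (qNat p n + 1) := by
  have hp : 0 < p := (Fact.out : p.Prime).pos
  intro n
  induction n using Nat.twoStepInduction with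
  | zero => exact hasAugOrder_zero_of_isUnit (isUnit_red p hP0)
  | one => exact hasAugOrder_zero_of_isUnit (isUnit_red p hP1)
  | more n ih _ =>
    have hq := qNat_lt_pow hp n
    refine HasAugOrder.of_piBar (pow_succ_sub_pow_add_lt hp hq).le ?_
    rw [← red_piMap, hrec, red_sub, red_smul_of_dvd p ha, zero_sub]
    exact (hasAugOrder_red_nuMap hq ih).neg

/-- In the setting of the previous statement, `λ(P_n) = q_n`. -/
theorem stmt17 (p : ℕ) [Fact p.Prime] (P : ∀ n, Lam p n)
    (hP0 : IsUnit (P 0)) (hP1 : IsUnit (P 1))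
    (a : ℤ_[p]) (ha : (p : ℤ_[p]) ∣ a)
    (hrec : ∀ n : ℕ, piMap p (n+1) (P (n+2)) = a • P (n+1) - nuMap p n (P n))
    (hP10 : ∃ u : ℤ_[p], IsUnit u ∧ piMap p 0 (P 1) = u • P 0) :
    ∀ n : ℕ, red p n (P n) ∈ (augIdeal p n) ^ (qNat p n) ∧
      red p n (P n) ∉ (augIdeal p n) ^ (qNat p n + 1) :=
  stmt17_general p P hP0 hP1 a ha hrec
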